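/- arXiv:2009.03581 — 4 statements merged into one kernel-verified Lean document; each statement's English description precedes it below -/
import Mathlib

section
/- If a signed Laplacian L satisfies L₊ = L − L₋ where L₋ is negative semidefinite (the Laplacian of the negative-edge subgraph) and L₊ (the Laplacian of the positive-edge subgraph) has zero eigenvalue of multiplicity at least 2, then L cannot be positive semidefinite with a simple zero eigenvalue. Equivalently: if L ≥ 0 with corank(L) = 1 and L = L₊ + L₋ with L₋ ≤ 0 symmetric (with L₋·1 = 0), then L₊ has corank exactly 1. -/
open Matrix

/-- If a signed Laplacian `L = L₊ + L₋` (with `L₊` PSD, `L₋` NSD, all annihilating `1`)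
is positive semidefinite with corank 1, then `L₊` has corank exactly 1. -/
theorem positive_part_connected_of_psd_corank_one (n : ℕ)
    (L Lp Lm : Matrix (Fin n) (Fin n) ℝ)
    (hsum : L = Lp + Lm)
    (hLp : Lp.PosSemidef) (hLm : (-Lm).PosSemidef)
    (hLm1 : Lm.mulVec (fun _ => (1 : ℝ)) = 0)
    (hLp1 : Lp.mulVec (fun _ => (1 : ℝ)) = 0)
    (hL : L.PosSemidef) (hcorank : n - L.rank = 1) :
    n - Lp.rank = 1 := by
  -- kernel inclusion: ker Lp ≤ ker L
  have hker : LinearMap.ker Lp.mulVecLin ≤ LinearMap.ker L.mulVecLin := by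
    intro x hx
    have hx' : Lp.mulVec x = 0 := hx
    have hquad : x ⬝ᵥ L.mulVec x = x ⬝ᵥ Lm.mulVec x := by
      rw [hsum, add_mulVec, hx', zero_add]
    have h1 : 0 ≤ x ⬝ᵥ L.mulVec x := by simpa using hL.dotProduct_mulVec_nonneg x
    have h2 : x ⬝ᵥ Lm.mulVec x ≤ 0 := by
      have := hLm.dotProduct_mulVec_nonneg x
      simp only [neg_mulVec, dotProduct_neg, star_trivial] at this
      linarith
    have hz : x ⬝ᵥ L.mulVec x = 0 := le_antisymm (hquad ▸ h2) h1
    have := (hL.dotProduct_mulVec_zero_iff x).mp (by simpa using hz)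
    exact this
  -- rank-nullity
  have hrnL : L.rank + Module.finrank ℝ (LinearMap.ker L.mulVecLin) = n := by
    have := LinearMap.finrank_range_add_finrank_ker L.mulVecLin
    simpa [Matrix.rank, Module.finrank_fintype_fun_eq_card] using this
  have hrnLp : Lp.rank + Module.finrank ℝ (LinearMap.ker Lp.mulVecLin) = n := by
    have := LinearMap.finrank_range_add_finrank_ker Lp.mulVecLin
    simpa [Matrix.rank, Module.finrank_fintype_fun_eq_card] using this
  have hkdim : Module.finrank ℝ (LinearMap.ker Lp.mulVecLin)
      ≤ Module.finrank ℝ (LinearMap.ker L.mulVecLin) :=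
    Submodule.finrank_mono hker
  have hrankL_le : L.rank ≤ n := by omega
  have hcorankL : Module.finrank ℝ (LinearMap.ker L.mulVecLin) = 1 := by omega
  -- n ≥ 1
  have hn : 1 ≤ n := by omega
  -- ones is in ker Lp and nonzero
  have hones : (fun _ => (1:ℝ)) ∈ LinearMap.ker Lp.mulVecLin := hLp1
  have hones_ne : (fun _ => (1:ℝ)) ≠ (0 : Fin n → ℝ) := by
    intro h
    have := congrFun h ⟨0, hn⟩
    simp at this
  have hpos : 0 < Module.finrank ℝ (LinearMap.ker Lp.mulVecLin) := by
    apply Module.finrank_pos_iff.mpr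
    exact nontrivial_of_ne ⟨_, hones⟩ 0 (by simpa [Submodule.mk_eq_zero] using hones_ne)
  omega
end

section
/- For real numbers a < 0 and a connected positive-weight Laplacian L₊ on n nodes, the rank-one perturbed matrix L = L₊ + a·d_{ij}d_{ij}ᵀ is positive semidefinite with corank 1 if and only if |a| < 1/(d_{ij}ᵀ L₊† d_{ij}). -/
open Matrix

/-- `B` is a Moore–Penrose pseudoinverse of `A` (the four Penrose equations). -/
def IsMoorePenroseInv {n : ℕ} (A B : Matrix (Fin n) (Fin n) ℝ) : Prop :=
  A * B * A = A ∧ B * A * B = B ∧ (A * B)ᵀ = A * B ∧ (B * A)ᵀ = B * A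

lemma mp_unique {n : ℕ} {A B C : Matrix (Fin n) (Fin n) ℝ}
    (hB : IsMoorePenroseInv A B) (hC : IsMoorePenroseInv A C) : B = C := by
  obtain ⟨hB1, hB2, hB3, hB4⟩ := hB
  obtain ⟨hC1, hC2, hC3, hC4⟩ := hC
  have key1 : (A*C) * (A*B) = A * B := by
    simp only [← Matrix.mul_assoc]
    rw [show A*C*A*B = (A*C*A)*B from by simp [Matrix.mul_assoc], hC1]
  have key2 : (A*C) * (A*B) = A * C := by
    calc (A*C)*(A*B) = (A*C)ᵀ*(A*B)ᵀ := by rw [hC3, hB3]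
    _ = ((A*B)*(A*C))ᵀ := (Matrix.transpose_mul _ _).symm
    _ = ((A*B*A)*C)ᵀ := by rw [show (A*B)*(A*C) = (A*B*A)*C from by simp [Matrix.mul_assoc]]
    _ = (A*C)ᵀ := by rw [hB1]
    _ = A*C := hC3
  have hAB : A * B = A * C := key1.symm.trans key2
  have key3 : (B*A) * (C*A) = B * A := by
    rw [show (B*A)*(C*A) = B*(A*C*A) from by simp [Matrix.mul_assoc], hC1]
  have key4 : (B*A) * (C*A) = C * A := by
    calc (B*A)*(C*A) = (B*A)ᵀ*(C*A)ᵀ := by rw [hB4, hC4]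
    _ = ((C*A)*(B*A))ᵀ := (Matrix.transpose_mul _ _).symm
    _ = (C*(A*B*A))ᵀ := by rw [show (C*A)*(B*A) = C*(A*B*A) from by simp [Matrix.mul_assoc]]
    _ = (C*A)ᵀ := by rw [hB1]
    _ = C*A := hC4
  have hBA : B * A = C * A := key3.symm.trans key4
  calc B = B*A*B := hB2.symm
  _ = C*A*B := by rw [hBA]
  _ = C*(A*B) := by rw [Matrix.mul_assoc]
  _ = C*(A*C) := by rw [hAB]
  _ = C*A*C := by rw [Matrix.mul_assoc]
  _ = C := hC2

lemma mp_symm {n : ℕ} {A B : Matrix (Fin n) (Fin n) ℝ} (hA : Aᵀ = A)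
    (h : IsMoorePenroseInv A B) : Bᵀ = B := by
  obtain ⟨h1, h2, h3, h4⟩ := h
  have hT : IsMoorePenroseInv A Bᵀ := by
    refine ⟨?_, ?_, ?_, ?_⟩
    · have := congrArg Matrix.transpose h1
      simp only [Matrix.transpose_mul, Matrix.transpose_transpose, hA] at this
      simpa [Matrix.mul_assoc] using this
    · have := congrArg Matrix.transpose h2
      simp only [Matrix.transpose_mul, Matrix.transpose_transpose, hA] at this
      simpa [Matrix.mul_assoc] using this
    · calc (A * Bᵀ)ᵀ = B * Aᵀ := by simp [Matrix.transpose_mul]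
      _ = B * A := by rw [hA]
      _ = (B*A)ᵀ := h4.symm
      _ = Aᵀ * Bᵀ := by simp [Matrix.transpose_mul]
      _ = A * Bᵀ := by rw [hA]
    · calc (Bᵀ * A)ᵀ = Aᵀ * B := by simp [Matrix.transpose_mul]
      _ = A * B := by rw [hA]
      _ = (A*B)ᵀ := h3.symm
      _ = Bᵀ * Aᵀ := by simp [Matrix.transpose_mul]
      _ = Bᵀ * A := by rw [hA]
  exact mp_unique hT ⟨h1, h2, h3, h4⟩

lemma symm_dot {n : ℕ} {A : Matrix (Fin n) (Fin n) ℝ} (hA : Aᵀ = A) (u w : Fin n → ℝ) :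
    u ⬝ᵥ A *ᵥ w = w ⬝ᵥ A *ᵥ u := by
  rw [dotProduct_mulVec, ← mulVec_transpose, hA, dotProduct_comm]

lemma psd_cs {n : ℕ} {A : Matrix (Fin n) (Fin n) ℝ} (hA : A.PosSemidef) (x y : Fin n → ℝ) :
    (x ⬝ᵥ A *ᵥ y)^2 ≤ (x ⬝ᵥ A *ᵥ x) * (y ⬝ᵥ A *ᵥ y) := by
  have hAt : Aᵀ = A := by
    have := hA.1
    rwa [Matrix.IsHermitian, conjTranspose_eq_transpose_of_trivial] at this
  have h : ∀ t : ℝ, 0 ≤ (y ⬝ᵥ A *ᵥ y) * (t*t) + (2*(x ⬝ᵥ A *ᵥ y)) * t + (x ⬝ᵥ A *ᵥ x) := by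
    intro t
    have h0 := hA.dotProduct_mulVec_nonneg (x + t • y)
    simp only [star_trivial, mulVec_add, mulVec_smul, dotProduct_add, add_dotProduct,
      dotProduct_smul, smul_dotProduct, smul_eq_mul, RCLike.ofReal_real_eq_id, id] at h0
    have hs := symm_dot hAt x y
    have he : (y ⬝ᵥ A *ᵥ y) * (t*t) + (2*(x ⬝ᵥ A *ᵥ y)) * t + (x ⬝ᵥ A *ᵥ x)
        = x ⬝ᵥ A *ᵥ x + t * (y ⬝ᵥ A *ᵥ x) + t * (x ⬝ᵥ A *ᵥ y + t * (y ⬝ᵥ A *ᵥ y)) := by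
      rw [hs]; ring
    rw [he]; exact h0
  have hd := discrim_le_zero h
  rw [discrim] at hd
  nlinarith [hd]

/-- Single negative edge: for a connected positive-weight Laplacian `L₊` and `a < 0`,
`L = L₊ + a·d_{ij} d_{ij}ᵀ` is PSD with corank 1 iff `|a| < 1/(d_{ij}ᵀ L₊† d_{ij})`. -/
theorem single_negative_edge_condition (n : ℕ) (i j : Fin n) (hij : i ≠ j)
    (Lp : Matrix (Fin n) (Fin n) ℝ) (hLp : Lp.PosSemidef)
    (hker : ∀ x : Fin n → ℝ, Lp.mulVec x = 0 ↔ ∃ c : ℝ, x = fun _ => c)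
    (Ld : Matrix (Fin n) (Fin n) ℝ) (hLd : IsMoorePenroseInv Lp Ld)
    (a : ℝ) (ha : a < 0) :
    (((Lp + a • Matrix.vecMulVec (Pi.single i 1 - Pi.single j 1)
            (Pi.single i 1 - Pi.single j 1)).PosSemidef ∧
        n - (Lp + a • Matrix.vecMulVec (Pi.single i 1 - Pi.single j 1)
            (Pi.single i 1 - Pi.single j 1)).rank = 1)) ↔
      |a| < 1 / ((Pi.single i 1 - Pi.single j 1) ⬝ᵥ
          Ld.mulVec (Pi.single i 1 - Pi.single j 1)) := by
  have hLpt : Lpᵀ = Lp := by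
    have := hLp.1
    rwa [Matrix.IsHermitian, conjTranspose_eq_transpose_of_trivial] at this
  have hLdt : Ldᵀ = Ld := mp_symm hLpt hLd
  obtain ⟨h1, h2, h3, h4⟩ := hLd
  set d : Fin n → ℝ := Pi.single i 1 - Pi.single j 1 with hd
  set ones : Fin n → ℝ := fun _ => (1:ℝ) with hones
  have hone0 : Lp *ᵥ ones = 0 := (hker ones).mpr ⟨1, rfl⟩
  have hdones : ones ⬝ᵥ d = 0 := by simp [hones, hd, dotProduct]
  have hdi : d i = 1 := by simp [hd, Pi.single_apply, hij]
  have hdne : d ≠ 0 := fun h => by simpa [h] using hdi.symm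
  have hcomm : Lp * Ld = Ld * Lp := by
    calc Lp * Ld = (Lp*Ld)ᵀ := h3.symm
    _ = Ldᵀ * Lpᵀ := Matrix.transpose_mul _ _
    _ = Ld * Lp := by rw [hLdt, hLpt]
  have hortho : ∀ z, ones ⬝ᵥ (Lp *ᵥ z) = 0 := by
    intro z
    rw [symm_dot hLpt, hone0, dotProduct_zero]
  have hproj : ∀ x : Fin n → ℝ, ones ⬝ᵥ x = 0 → Lp *ᵥ (Ld *ᵥ x) = x := by
    intro x hx
    have hy : Lp *ᵥ (x - Lp *ᵥ (Ld *ᵥ x)) = 0 := by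
      rw [mulVec_sub, mulVec_mulVec, mulVec_mulVec]
      rw [show Lp * Lp * Ld = Lp from by
        rw [Matrix.mul_assoc, hcomm, ← Matrix.mul_assoc, h1]]
      simp
    obtain ⟨c, hc⟩ := (hker _).mp hy
    have hsum : ones ⬝ᵥ (x - Lp *ᵥ (Ld *ᵥ x)) = 0 := by
      rw [dotProduct_sub, hx, hortho, sub_zero]
    rw [hc] at hsum
    have hnc : (n:ℝ) * c = 0 := by
      simpa [hones, dotProduct, Finset.sum_const, nsmul_eq_mul] using hsum
    have hn : (n:ℝ) ≠ 0 := Nat.cast_ne_zero.mpr (Fin.pos i).ne'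
    have hc0 : c = 0 := by
      rcases mul_eq_zero.mp hnc with h | h
      · exact absurd h hn
      · exact h
    have := hc
    rw [hc0] at this
    have h0 : x - Lp *ᵥ (Ld *ᵥ x) = 0 := by rw [this]; rfl
    exact (sub_eq_zero.mp h0).symm
  set r : ℝ := d ⬝ᵥ Ld *ᵥ d with hr
  have hPd : Lp *ᵥ (Ld *ᵥ d) = d := hproj d hdones
  have hq : (Ld *ᵥ d) ⬝ᵥ Lp *ᵥ (Ld *ᵥ d) = r := by
    rw [hPd, dotProduct_comm, hr]
  have hnn : ∀ z, 0 ≤ z ⬝ᵥ Lp *ᵥ z := fun z => by simpa using hLp.dotProduct_mulVec_nonneg z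
  have hr0 : 0 < r := by
    rcases (hnn (Ld *ᵥ d)).lt_or_eq with h | h
    · rwa [hq] at h
    · exfalso
      have h0 : Lp *ᵥ (Ld *ᵥ d) = 0 :=
        (hLp.dotProduct_mulVec_zero_iff _).mp (by simpa using h.symm)
      exact hdne (hPd ▸ h0)
  have hMv : ∀ x, (vecMulVec d d) *ᵥ x = (d ⬝ᵥ x) • d := by
    intro x; funext k
    simp only [vecMulVec, mulVec, dotProduct, of_apply, Pi.smul_apply, smul_eq_mul]
    rw [Finset.sum_mul]
    exact Finset.sum_congr rfl fun l _ => by ring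
  set L := Lp + a • vecMulVec d d with hL
  have hquad : ∀ x, x ⬝ᵥ L *ᵥ x = x ⬝ᵥ Lp *ᵥ x + a * (d ⬝ᵥ x)^2 := by
    intro x
    rw [hL, add_mulVec, dotProduct_add, smul_mulVec, hMv]
    simp only [dotProduct_smul, smul_eq_mul]
    rw [dotProduct_comm x d]; ring
  have hcs : ∀ x, (d ⬝ᵥ x)^2 ≤ r * (x ⬝ᵥ Lp *ᵥ x) := by
    intro x
    have h1' : d ⬝ᵥ x = (Ld *ᵥ d) ⬝ᵥ Lp *ᵥ x := by
      conv_lhs => rw [← hPd]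
      rw [dotProduct_comm, symm_dot hLpt]
    rw [h1']
    have hps := psd_cs hLp (Ld *ᵥ d) x
    rwa [hq] at hps
  have hMt : (vecMulVec d d)ᵀ = vecMulVec d d := by
    ext k l; simp [vecMulVec, mul_comm]
  have hLt : Lᵀ = L := by rw [hL, transpose_add, transpose_smul, hMt, hLpt]
  have hLh : L.IsHermitian := by
    rw [Matrix.IsHermitian, conjTranspose_eq_transpose_of_trivial]; exact hLt
  have hLones : L *ᵥ ones = 0 := by
    rw [hL, add_mulVec, smul_mulVec, hMv, hone0, dotProduct_comm, hdones]
    simp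
  have hrn : L.rank + Module.finrank ℝ (LinearMap.ker L.mulVecLin) = n := by
    have := LinearMap.finrank_range_add_finrank_ker L.mulVecLin
    rwa [Module.finrank_fin_fun] at this
  have honesne : ones ≠ 0 := fun h => by simpa [hones] using congrFun h i
  have hspan : (ℝ ∙ ones) ≤ LinearMap.ker L.mulVecLin := by
    rw [Submodule.span_singleton_le_iff_mem]
    exact LinearMap.mem_ker.mpr (by simpa [mulVecLin_apply] using hLones)
  have hiff : |a| < 1 / r ↔ 0 < 1 + a * r := by
    rw [abs_of_neg ha, lt_div_iff₀ hr0]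
    constructor <;> intro <;> nlinarith
  rw [hiff]
  constructor
  · rintro ⟨hPSD, hrank⟩
    by_contra hcon
    push_neg at hcon
    have hxq : (Ld *ᵥ d) ⬝ᵥ L *ᵥ (Ld *ᵥ d) = r * (1 + a*r) := by
      rw [hquad, hq, ← hr]; ring
    have hge : 0 ≤ (Ld *ᵥ d) ⬝ᵥ L *ᵥ (Ld *ᵥ d) := by simpa using hPSD.dotProduct_mulVec_nonneg (Ld *ᵥ d)
    have h0 : (Ld *ᵥ d) ⬝ᵥ L *ᵥ (Ld *ᵥ d) = 0 :=
      le_antisymm (by rw [hxq]; nlinarith) hge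
    have hm : r * (1 + a*r) = 0 := by rw [← hxq]; exact h0
    have hzero : 1 + a*r = 0 := by
      rcases mul_eq_zero.mp hm with h | h
      · exact absurd h hr0.ne'
      · exact h
    have hLx : L *ᵥ (Ld *ᵥ d) = 0 :=
      (hPSD.dotProduct_mulVec_zero_iff _).mp (by simpa using h0)
    have hker1 : Module.finrank ℝ (LinearMap.ker L.mulVecLin) = 1 := by omega
    have heq : (ℝ ∙ ones) = LinearMap.ker L.mulVecLin :=
      Submodule.eq_of_le_of_finrank_le hspan
        (by rw [hker1, finrank_span_singleton honesne])
    have hxmem : Ld *ᵥ d ∈ (ℝ ∙ ones) := by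
      rw [heq]; exact LinearMap.mem_ker.mpr (by simpa [mulVecLin_apply] using hLx)
    obtain ⟨c, hc⟩ := Submodule.mem_span_singleton.mp hxmem
    have hrz : r = 0 := by
      rw [hr, ← hc, dotProduct_smul, smul_eq_mul, dotProduct_comm, hdones, mul_zero]
    linarith
  · intro hpos
    have hPSD : L.PosSemidef := by
      refine PosSemidef.of_dotProduct_mulVec_nonneg hLh (fun x => ?_)
      have hx := hquad x
      have hq' := hnn x
      have hcs' := hcs x
      have hstar : star x = x := star_trivial x
      rw [hstar, hx]
      nlinarith [mul_le_mul_of_nonpos_left hcs' ha.le, mul_nonneg hpos.le hq']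
    refine ⟨hPSD, ?_⟩
    have hkereq : LinearMap.ker L.mulVecLin = ℝ ∙ ones := by
      refine le_antisymm (fun x hx => ?_) hspan
      have hLx : L *ᵥ x = 0 := by simpa [mulVecLin_apply] using hx
      have h0 : x ⬝ᵥ L *ᵥ x = 0 := by rw [hLx, dotProduct_zero]
      rw [hquad] at h0
      have hq' := hnn x
      have hcs' := hcs x
      have hxq0 : x ⬝ᵥ Lp *ᵥ x = 0 := by
        have hle : x ⬝ᵥ Lp *ᵥ x ≤ 0 := by
          nlinarith [mul_le_mul_of_nonpos_left hcs' ha.le]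
        exact le_antisymm hle hq'
      have hLpx : Lp *ᵥ x = 0 := (hLp.dotProduct_mulVec_zero_iff x).mp (by simpa using hxq0)
      obtain ⟨c, hc⟩ := (hker x).mp hLpx
      exact Submodule.mem_span_singleton.mpr ⟨c, by rw [hc]; funext k; simp [hones]⟩
    have hker1 : Module.finrank ℝ (LinearMap.ker L.mulVecLin) = 1 := by
      rw [hkereq, finrank_span_singleton honesne]
    omega
end

section
/- A symmetric real n×n matrix A is eventually positive (there exists k₀ such that Aᵏ has all entries strictly positive for all k ≥ k₀) if and only if it possesses the strong Perron–Frobenius property: ρ(A) is a simple positive eigenvalue of A with a strictly positive eigenvector, and |λ| < ρ(A) for every other eigenvalue λ of A. -/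
open Matrix Finset

lemma quad_form {n : ℕ} (U B : Matrix (Fin n) (Fin n) ℝ) (ν : Fin n → ℝ)
    (hB : ∀ i j, B i j = ∑ l, ν l * (U i l * U j l)) (y : Fin n → ℝ) :
    ∑ i, ∑ j, B i j * y i * y j = ∑ l, ν l * (∑ i, U i l * y i) ^ 2 := by
  calc ∑ i, ∑ j, B i j * y i * y j
      = ∑ i, ∑ j, ∑ l, (ν l * (U i l * y i)) * (U j l * y j) := by
        refine Finset.sum_congr rfl fun i _ => Finset.sum_congr rfl fun j _ => ?_
        rw [hB, Finset.sum_mul, Finset.sum_mul]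
        exact Finset.sum_congr rfl fun l _ => by ring
    _ = ∑ i, ∑ l, ∑ j, (ν l * (U i l * y i)) * (U j l * y j) :=
        Finset.sum_congr rfl fun i _ => Finset.sum_comm
    _ = ∑ l, ∑ i, ∑ j, (ν l * (U i l * y i)) * (U j l * y j) :=
        Finset.sum_comm
    _ = ∑ l, ν l * (∑ i, U i l * y i) ^ 2 := by
        refine Finset.sum_congr rfl fun l _ => ?_
        rw [sq, Finset.sum_mul_sum, Finset.mul_sum]
        refine Finset.sum_congr rfl fun i _ => ?_
        rw [Finset.mul_sum]
        exact Finset.sum_congr rfl fun j _ => by ring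

lemma parseval {n : ℕ} (U : Matrix (Fin n) (Fin n) ℝ)
    (hrow : ∀ i j, (∑ l, U i l * U j l) = if i = j then 1 else 0) (y : Fin n → ℝ) :
    ∑ l, (∑ i, U i l * y i) ^ 2 = ∑ i, (y i) ^ 2 := by
  calc ∑ l, (∑ i, U i l * y i) ^ 2
      = ∑ l, ∑ i, ∑ j, (U i l * y i) * (U j l * y j) := by
        refine Finset.sum_congr rfl fun l _ => ?_
        rw [sq, Finset.sum_mul_sum]
    _ = ∑ i, ∑ l, ∑ j, (U i l * y i) * (U j l * y j) := Finset.sum_comm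
    _ = ∑ i, ∑ j, ∑ l, (U i l * y i) * (U j l * y j) :=
        Finset.sum_congr rfl fun i _ => Finset.sum_comm
    _ = ∑ i, ∑ j, (y i * y j) * (if i = j then 1 else 0) := by
        refine Finset.sum_congr rfl fun i _ => Finset.sum_congr rfl fun j _ => ?_
        rw [← hrow i j, Finset.mul_sum]
        exact Finset.sum_congr rfl fun l _ => by ring
    _ = ∑ i, (y i) ^ 2 := by
        refine Finset.sum_congr rfl fun i _ => ?_
        rw [Finset.sum_eq_single i]
        · simp [sq]
        · intro j _ hj; simp [(Ne.symm hj : ¬ i = j)]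
        · simp

lemma eigen_eq {n : ℕ} (U B : Matrix (Fin n) (Fin n) ℝ) (ν : Fin n → ℝ)
    (hcol : ∀ l m, (∑ i, U i l * U i m) = if l = m then 1 else 0)
    (hB : ∀ i j, B i j = ∑ l, ν l * (U i l * U j l)) (l : Fin n) :
    B *ᵥ (fun i => U i l) = ν l • (fun i => U i l) := by
  funext i
  simp only [mulVec, dotProduct, Pi.smul_apply, smul_eq_mul]
  calc ∑ j, B i j * U j l
      = ∑ j, ∑ m, (ν m * U i m) * (U j m * U j l) := by
        refine Finset.sum_congr rfl fun j _ => ?_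
        rw [hB, Finset.sum_mul]
        exact Finset.sum_congr rfl fun m _ => by ring
    _ = ∑ m, ∑ j, (ν m * U i m) * (U j m * U j l) := Finset.sum_comm
    _ = ∑ m, (ν m * U i m) * (if m = l then 1 else 0) := by
        refine Finset.sum_congr rfl fun m _ => ?_
        rw [← Finset.mul_sum, hcol]
    _ = ν l * U i l := by
        rw [Finset.sum_eq_single l] <;> simp +contextual

lemma perron {n : ℕ} (hn : 0 < n) (U B : Matrix (Fin n) (Fin n) ℝ) (ν : Fin n → ℝ)
    (hrow : ∀ i j, (∑ l, U i l * U j l) = if i = j then 1 else 0)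
    (hcol : ∀ l m, (∑ i, U i l * U i m) = if l = m then 1 else 0)
    (hB : ∀ i j, B i j = ∑ l, ν l * (U i l * U j l))
    (hpos : ∀ i j, 0 < B i j) :
    ∃ l₀ : Fin n, 0 < ν l₀ ∧ (∀ m, m ≠ l₀ → |ν m| < ν l₀) ∧
      ∃ ε : ℝ, ∀ i, 0 < ε * U i l₀ := by
  haveI : NeZero n := ⟨hn.ne'⟩
  -- maximizer of ν
  obtain ⟨l₀, -, hmax⟩ := Finset.exists_max_image (Finset.univ : Finset (Fin n)) ν
    ⟨⟨0, hn⟩, Finset.mem_univ _⟩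
  replace hmax : ∀ m, ν m ≤ ν l₀ := fun m => hmax m (Finset.mem_univ m)
  set β := ν l₀ with hβ
  -- Rayleigh upper bound
  have rayleigh : ∀ y : Fin n → ℝ, ∑ i, ∑ j, B i j * y i * y j ≤ β * ∑ i, (y i) ^ 2 := by
    intro y
    rw [quad_form U B ν hB y, ← parseval U hrow y, Finset.mul_sum]
    exact Finset.sum_le_sum fun l _ =>
      mul_le_mul_of_nonneg_right (hmax l) (sq_nonneg _)
  -- value on eigenvector columns
  have Qcol : ∀ m, ∑ i, ∑ j, B i j * U i m * U j m = ν m := by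
    intro m
    rw [quad_form U B ν hB (fun i => U i m)]
    rw [Finset.sum_eq_single m]
    · rw [hcol m m]; simp
    · intro l _ hl; rw [hcol l m]; simp [hl]
    · simp
  have colnorm : ∀ m, ∑ i, (U i m) ^ 2 = 1 := by
    intro m
    simpa [sq] using hcol m m
  -- |ν m| ≤ Q(|x_m|) ≤ β
  have Qabs_ge : ∀ m, |ν m| ≤ ∑ i, ∑ j, B i j * |U i m| * |U j m| := by
    intro m
    rw [← Qcol m]
    calc |∑ i, ∑ j, B i j * U i m * U j m|
        ≤ ∑ i, |∑ j, B i j * U i m * U j m| := Finset.abs_sum_le_sum_abs _ _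
      _ ≤ ∑ i, ∑ j, |B i j * U i m * U j m| :=
          Finset.sum_le_sum fun i _ => Finset.abs_sum_le_sum_abs _ _
      _ = ∑ i, ∑ j, B i j * |U i m| * |U j m| := by
          refine Finset.sum_congr rfl fun i _ => Finset.sum_congr rfl fun j _ => ?_
          rw [abs_mul, abs_mul, abs_of_pos (hpos i j)]
  have Qabs_le : ∀ m, ∑ i, ∑ j, B i j * |U i m| * |U j m| ≤ β := by
    intro m
    have := rayleigh (fun i => |U i m|)
    simp only [sq_abs] at this
    calc ∑ i, ∑ j, B i j * |U i m| * |U j m| ≤ β * ∑ i, (U i m) ^ 2 := this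
      _ = β := by rw [colnorm m, mul_one]
  have habs : ∀ m, |ν m| ≤ β := fun m => le_trans (Qabs_ge m) (Qabs_le m)
  -- β > 0 via trace
  have trace_pos : 0 < ∑ l, ν l := by
    have ht : ∑ i, B i i = ∑ l, ν l := by
      calc ∑ i, B i i = ∑ i, ∑ l, ν l * (U i l * U i l) :=
            Finset.sum_congr rfl fun i _ => hB i i
        _ = ∑ l, ∑ i, ν l * (U i l * U i l) := Finset.sum_comm
        _ = ∑ l, ν l := by
            refine Finset.sum_congr rfl fun l _ => ?_
            rw [← Finset.mul_sum, hcol l l]; simp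
    rw [← ht]
    exact Finset.sum_pos (fun i _ => hpos i i) Finset.univ_nonempty
  have hβpos : 0 < β := by
    by_contra h
    push_neg at h
    have : ∑ l, ν l ≤ 0 := Finset.sum_nonpos fun l _ => (hmax l).trans h
    linarith
  -- one-signed positive eigenvector for any m with ν m = β
  have onesigned : ∀ m, ν m = β → ∃ ε : ℝ, ∀ i, 0 < ε * U i m := by
    intro m hm
    set x : Fin n → ℝ := fun i => U i m with hx
    have hQeq : ∑ i, ∑ j, B i j * |x i| * |x j| = β := by
      refine le_antisymm (Qabs_le m) ?_
      calc β = |ν m| := by rw [hm, abs_of_pos hβpos]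
        _ ≤ _ := Qabs_ge m
    have hzero : ∑ i, ∑ j, B i j * (|x i| * |x j| - x i * x j) = 0 := by
      have expand : ∀ i, ∑ j, B i j * (|x i| * |x j| - x i * x j)
          = (∑ j, B i j * |x i| * |x j|) - ∑ j, B i j * x i * x j := by
        intro i
        rw [← Finset.sum_sub_distrib]
        exact Finset.sum_congr rfl fun j _ => by ring
      calc ∑ i, ∑ j, B i j * (|x i| * |x j| - x i * x j)
          = (∑ i, ∑ j, B i j * |x i| * |x j|) - ∑ i, ∑ j, B i j * x i * x j := by
            rw [← Finset.sum_sub_distrib]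
            exact Finset.sum_congr rfl fun i _ => expand i
        _ = β - ν m := by rw [hQeq, Qcol m]
        _ = 0 := by rw [hm, sub_self]
    have hterm : ∀ i j, x i * x j = |x i| * |x j| := by
      have hnn : ∀ i ∈ Finset.univ, (0:ℝ) ≤ ∑ j, B i j * (|x i| * |x j| - x i * x j) :=
        fun i _ => Finset.sum_nonneg fun j _ => mul_nonneg (hpos i j).le
          (by rw [← abs_mul]; linarith [neg_abs_le (x i * x j), abs_nonneg (x i * x j),
                le_abs_self (x i * x j)])
      have h1 := (Finset.sum_eq_zero_iff_of_nonneg hnn).mp hzero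
      intro i j
      have h2 := (Finset.sum_eq_zero_iff_of_nonneg (fun j _ =>
        mul_nonneg (hpos i j).le (by rw [← abs_mul]; linarith [le_abs_self (x i * x j)]))).mp
        (h1 i (Finset.mem_univ i)) j (Finset.mem_univ j)
      have hb := (hpos i j).ne'
      have : |x i| * |x j| - x i * x j = 0 := by
        rcases mul_eq_zero.mp h2 with h | h
        · exact absurd h hb
        · exact h
      linarith
    -- from sign condition, get one-signedness
    have hsign : (∀ i, 0 ≤ x i) ∨ (∀ i, x i ≤ 0) := by
      by_cases hex : ∃ i, 0 < x i
      · obtain ⟨i₁, hi₁⟩ := hex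
        left
        intro j
        have := hterm i₁ j
        nlinarith [abs_nonneg (x i₁), abs_nonneg (x j), abs_mul (x i₁) (x j)]
      · right
        push_neg at hex
        exact hex
    obtain ⟨ε, hε1, hεnn⟩ : ∃ ε : ℝ, (ε = 1 ∨ ε = -1) ∧ ∀ i, 0 ≤ ε * x i := by
      rcases hsign with h | h
      · exact ⟨1, Or.inl rfl, fun i => by simpa using h i⟩
      · exact ⟨-1, Or.inr rfl, fun i => by simpa using neg_nonneg.mpr (h i)⟩
    -- eigen equation
    have heig := eigen_eq U B ν hcol hB m
    have heigy : ∀ i, ∑ j, B i j * (ε * x j) = β * (ε * x i) := by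
      intro i
      have := congrFun heig i
      simp only [mulVec, dotProduct, Pi.smul_apply, smul_eq_mul] at this
      calc ∑ j, B i j * (ε * x j) = ε * ∑ j, B i j * x j := by
            rw [Finset.mul_sum]; exact Finset.sum_congr rfl fun j _ => by ring
        _ = ε * (ν m * x i) := by rw [this]
        _ = β * (ε * x i) := by rw [hm]; ring
    -- nonzero coordinate
    obtain ⟨j₀, hj₀⟩ : ∃ j₀, 0 < ε * x j₀ := by
      by_contra h
      push_neg at h
      have hz : ∀ i, x i = 0 := by
        intro i
        have h1 := hεnn i
        have h2 := h i
        have : ε * x i = 0 := le_antisymm h2 h1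
        rcases hε1 with rfl | rfl <;> simpa using this
      have := colnorm m
      rw [Finset.sum_eq_zero (fun i _ => by rw [show U i m = x i from rfl, hz i]; ring)] at this
      norm_num at this
    refine ⟨ε, fun i => ?_⟩
    have hge : B i j₀ * (ε * x j₀) ≤ ∑ j, B i j * (ε * x j) :=
      Finset.single_le_sum (fun j _ => mul_nonneg (hpos i j).le (hεnn j)) (Finset.mem_univ j₀)
    have h1 : 0 < β * (ε * x i) := lt_of_lt_of_le (mul_pos (hpos i j₀) hj₀) (hge.trans_eq (heigy i))
    rcases mul_pos_iff.mp h1 with ⟨-, h⟩ | ⟨h, -⟩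
    · exact h
    · exact absurd hβpos (not_lt.mpr h.le)
  -- exclude ν m = -β
  have hneg : ∀ m, ν m ≠ -β := by
    intro m hm
    set x : Fin n → ℝ := fun i => U i m with hx
    have hQeq : ∑ i, ∑ j, B i j * |x i| * |x j| = β := by
      refine le_antisymm (Qabs_le m) ?_
      calc β = |ν m| := by rw [hm, abs_neg, abs_of_pos hβpos]
        _ ≤ _ := Qabs_ge m
    have hzero : ∑ i, ∑ j, B i j * (|x i| * |x j| + x i * x j) = 0 := by
      have expand : ∀ i, ∑ j, B i j * (|x i| * |x j| + x i * x j)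
          = (∑ j, B i j * |x i| * |x j|) + ∑ j, B i j * x i * x j := by
        intro i
        rw [← Finset.sum_add_distrib]
        exact Finset.sum_congr rfl fun j _ => by ring
      calc ∑ i, ∑ j, B i j * (|x i| * |x j| + x i * x j)
          = (∑ i, ∑ j, B i j * |x i| * |x j|) + ∑ i, ∑ j, B i j * x i * x j := by
            rw [← Finset.sum_add_distrib]
            exact Finset.sum_congr rfl fun i _ => expand i
        _ = β + ν m := by rw [hQeq, Qcol m]
        _ = 0 := by rw [hm]; ring
    have hterm : ∀ i, x i = 0 := by
      have hnn : ∀ i ∈ Finset.univ, (0:ℝ) ≤ ∑ j, B i j * (|x i| * |x j| + x i * x j) :=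
        fun i _ => Finset.sum_nonneg fun j _ => mul_nonneg (hpos i j).le
          (by rw [← abs_mul]; linarith [neg_abs_le (x i * x j)])
      have h1 := (Finset.sum_eq_zero_iff_of_nonneg hnn).mp hzero
      intro i
      have h2 := (Finset.sum_eq_zero_iff_of_nonneg (fun (j : Fin n) (_ : j ∈ Finset.univ) =>
        mul_nonneg (hpos i j).le (by rw [← abs_mul]; linarith [neg_abs_le (x i * x j)]) )).mp
        (h1 i (Finset.mem_univ i)) i (Finset.mem_univ i)
      have h3 : |x i| * |x i| + x i * x i = 0 := by
        rcases mul_eq_zero.mp h2 with h | h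
        · exact absurd h (hpos i i).ne'
        · exact h
      have h4 : x i * x i = 0 := by
        have := abs_mul_abs_self (x i)
        linarith
      exact mul_self_eq_zero.mp h4
    have := colnorm m
    rw [Finset.sum_eq_zero (fun i _ => by rw [show U i m = x i from rfl, hterm i]; ring)] at this
    norm_num at this
  -- conclude
  obtain ⟨ε, hε⟩ := onesigned l₀ rfl
  refine ⟨l₀, hβpos, fun m hm => ?_, ε, hε⟩
  rcases lt_or_eq_of_le (habs m) with h | h
  · exact h
  · rcases abs_eq (le_of_lt hβpos) |>.mp h with h' | h'
    · exfalso
      obtain ⟨ε₂, hε₂⟩ := onesigned m h'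
      have horth := hcol l₀ m
      rw [if_neg (Ne.symm hm)] at horth
      have : (0:ℝ) < ∑ i, (ε * U i l₀) * (ε₂ * U i m) :=
        Finset.sum_pos (fun i _ => mul_pos (hε i) (hε₂ i)) Finset.univ_nonempty
      have heq : ∑ i, (ε * U i l₀) * (ε₂ * U i m) = ε * ε₂ * ∑ i, U i l₀ * U i m := by
        rw [Finset.mul_sum]; exact Finset.sum_congr rfl fun i _ => by ring
      rw [heq, horth, mul_zero] at this
      exact lt_irrefl 0 this
    · exact absurd h' (hneg m)

lemma spectral_entries {n : ℕ} (A : Matrix (Fin n) (Fin n) ℝ) (hA : A.IsHermitian) :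
    ∃ U : Matrix (Fin n) (Fin n) ℝ,
      (∀ i j, (∑ l, U i l * U j l) = if i = j then 1 else 0) ∧
      (∀ l m, (∑ i, U i l * U i m) = if l = m then 1 else 0) ∧
      (∀ k i j, (A ^ k) i j = ∑ l, hA.eigenvalues l ^ k * (U i l * U j l)) := by
  set U : Matrix (Fin n) (Fin n) ℝ := (hA.eigenvectorUnitary : Matrix (Fin n) (Fin n) ℝ) with hUdef
  set μ := hA.eigenvalues with hμdef
  have hmem := (hA.eigenvectorUnitary).2
  have hU1 : U * star U = 1 := by
    rw [← Matrix.mem_unitaryGroup_iff]; exact hmem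
  have hU2 : star U * U = 1 := by
    rw [← Matrix.mem_unitaryGroup_iff']; exact hmem
  have hspec : A = U * Matrix.diagonal μ * star U := by
    simpa using hA.spectral_theorem
  have hApow : ∀ k : ℕ, A ^ k = U * Matrix.diagonal (fun l => μ l ^ k) * star U := by
    intro k
    induction k with
    | zero =>
      simp only [pow_zero, Matrix.diagonal_one, Matrix.mul_one]
      exact hU1.symm
    | succ k ih =>
      rw [pow_succ, ih]
      conv_lhs => rw [hspec]
      calc U * Matrix.diagonal (fun l => μ l ^ k) * star U * (U * Matrix.diagonal μ * star U)
          = U * Matrix.diagonal (fun l => μ l ^ k) * (star U * U) * Matrix.diagonal μ * star U := by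
            simp only [Matrix.mul_assoc]
        _ = U * (Matrix.diagonal (fun l => μ l ^ k) * Matrix.diagonal μ) * star U := by
            rw [hU2]
            simp only [Matrix.mul_assoc, Matrix.one_mul]
        _ = U * Matrix.diagonal (fun l => μ l ^ (k + 1)) * star U := by
            rw [Matrix.diagonal_mul_diagonal]
            have h9 : (fun l => μ l ^ k * μ l) = fun l => μ l ^ (k + 1) :=
              funext fun l => (pow_succ _ _).symm
            rw [h9]
  refine ⟨U, ?_, ?_, ?_⟩
  · intro i j
    have := congrFun (congrFun hU1 i) j
    simp only [Matrix.mul_apply, Matrix.star_apply, star_trivial, Matrix.one_apply] at this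
    exact this
  · intro l m
    have := congrFun (congrFun hU2 l) m
    simp only [Matrix.mul_apply, Matrix.star_apply, star_trivial, Matrix.one_apply] at this
    rw [← this]
  · intro k i j
    rw [hApow k]
    simp only [Matrix.mul_apply, Matrix.mul_diagonal, Matrix.star_apply, star_trivial]
    refine Finset.sum_congr rfl fun l _ => ?_
    rw [Finset.sum_eq_single l]
    · rw [Matrix.diagonal_apply_eq]; ring
    · intro m _ hm; rw [Matrix.diagonal_apply_ne _ hm]; ring
    · simp


/-- A symmetric real matrix is eventually positive iff it possesses the strong
Perron–Frobenius property: the spectral radius is a simple positive eigenvalue with a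
strictly positive eigenvector, strictly dominating all other eigenvalues in modulus. -/
theorem eventually_positive_iff_strong_perron_frobenius (n : ℕ) (hn : 0 < n)
    (A : Matrix (Fin n) (Fin n) ℝ) (hA : A.IsHermitian) :
    (∃ k₀ : ℕ, ∀ k ≥ k₀, ∀ i j : Fin n, 0 < (A ^ k) i j) ↔
      ∃ (i₀ : Fin n) (v : Fin n → ℝ),
        0 < hA.eigenvalues i₀ ∧ (∀ i, 0 < v i) ∧
        A.mulVec v = hA.eigenvalues i₀ • v ∧
        ∀ i : Fin n, i ≠ i₀ → |hA.eigenvalues i| < hA.eigenvalues i₀ := by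
  obtain ⟨U, hrow, hcol, hent⟩ := spectral_entries A hA
  set μ := hA.eigenvalues with hμ
  have hA1 : ∀ i j, A i j = ∑ l, μ l * (U i l * U j l) := by
    intro i j
    have := hent 1 i j
    simpa [pow_one] using this
  haveI : Nonempty (Fin n) := ⟨⟨0, hn⟩⟩
  constructor
  · rintro ⟨k₀, hk₀⟩
    set k := 2 * k₀ + 1 with hk
    have hodd : Odd k := ⟨k₀, by omega⟩
    have hkege : k ≥ k₀ := by omega
    obtain ⟨l₀, hνpos, hdom, ε, hε⟩ := perron hn U (A ^ k) (fun l => μ l ^ k)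
      hrow hcol (fun i j => hent k i j) (fun i j => hk₀ k hkege i j)
    have hμ0 : 0 < μ l₀ := (Odd.pow_pos_iff hodd).mp hνpos
    refine ⟨l₀, fun i => ε * U i l₀, hμ0, hε, ?_, ?_⟩
    · have heig := eigen_eq U A μ hcol hA1 l₀
      funext i
      simp only [mulVec, dotProduct, Pi.smul_apply, smul_eq_mul]
      have h2 := congrFun heig i
      simp only [mulVec, dotProduct, Pi.smul_apply, smul_eq_mul] at h2
      calc ∑ j, A i j * (ε * U j l₀) = ε * ∑ j, A i j * U j l₀ := by
            rw [Finset.mul_sum]; exact Finset.sum_congr rfl fun j _ => by ring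
        _ = ε * (μ l₀ * U i l₀) := by rw [h2]
        _ = μ l₀ * (ε * U i l₀) := by ring
    · intro i hi
      have h := hdom i hi
      rw [abs_pow] at h
      exact (pow_lt_pow_iff_left₀ (abs_nonneg _) hμ0.le (by omega)).mp h
  · rintro ⟨i₀, v, hμpos, hv, hveq, hdom⟩
    have hAsymm : ∀ i j, A j i = A i j := by
      intro i j; conv_lhs => rw [← hA]
      simp [conjTranspose_apply]
    have hmv : ∀ j, ∑ i, A j i * v i = μ i₀ * v j := by
      intro j
      have := congrFun hveq j
      simpa [mulVec, dotProduct] using this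
    have hczero : ∀ l, l ≠ i₀ → (∑ i, U i l * v i) = 0 := by
      intro l hl
      have heig := eigen_eq U A μ hcol hA1 l
      have h1 : ∀ i, ∑ j, A i j * U j l = μ l * U i l := by
        intro i
        have := congrFun heig i
        simpa [mulVec, dotProduct] using this
      have key : μ l * (∑ i, U i l * v i) = μ i₀ * (∑ i, U i l * v i) := by
        calc μ l * (∑ i, U i l * v i) = ∑ i, (μ l * U i l) * v i := by
              rw [Finset.mul_sum]; exact Finset.sum_congr rfl fun i _ => by ring
          _ = ∑ i, (∑ j, A i j * U j l) * v i :=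
              Finset.sum_congr rfl fun i _ => by rw [h1 i]
          _ = ∑ i, ∑ j, (A i j * U j l) * v i :=
              Finset.sum_congr rfl fun i _ => by rw [Finset.sum_mul]
          _ = ∑ j, ∑ i, (A i j * U j l) * v i := Finset.sum_comm
          _ = ∑ j, U j l * (∑ i, A j i * v i) := by
              refine Finset.sum_congr rfl fun j _ => ?_
              rw [Finset.mul_sum]
              refine Finset.sum_congr rfl fun i _ => ?_
              rw [hAsymm i j]; ring
          _ = ∑ j, U j l * (μ i₀ * v j) :=
              Finset.sum_congr rfl fun j _ => by rw [hmv j]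
          _ = μ i₀ * (∑ i, U i l * v i) := by
              rw [Finset.mul_sum]; exact Finset.sum_congr rfl fun j _ => by ring
      have hne : μ l ≠ μ i₀ := by
        have hd := hdom l hl
        intro he
        rw [he] at hd
        exact absurd hd (by simp [abs_of_pos hμpos])
      by_contra hcz
      exact hne (mul_right_cancel₀ hcz key)
    set c := ∑ i, U i i₀ * v i with hcdef
    have hvexp : ∀ j, v j = c * U j i₀ := by
      intro j
      have h0 : ∑ l, U j l * (∑ i, U i l * v i) = v j := by
        calc ∑ l, U j l * (∑ i, U i l * v i)
            = ∑ l, ∑ i, U j l * (U i l * v i) :=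
              Finset.sum_congr rfl fun l _ => by rw [Finset.mul_sum]
          _ = ∑ i, ∑ l, U j l * (U i l * v i) := Finset.sum_comm
          _ = ∑ i, v i * (∑ l, U j l * U i l) := by
              refine Finset.sum_congr rfl fun i _ => ?_
              rw [Finset.mul_sum]
              exact Finset.sum_congr rfl fun l _ => by ring
          _ = v j := by
              rw [Finset.sum_eq_single j]
              · rw [hrow j j, if_pos rfl, mul_one]
              · intro i _ hi; rw [hrow j i, if_neg (Ne.symm hi), mul_zero]
              · simp
      rw [← h0, Finset.sum_eq_single i₀]
      · exact mul_comm _ _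
      · intro l _ hl; rw [hczero l hl, mul_zero]
      · simp
    have hcne : c ≠ 0 := by
      intro h0
      have hx := hvexp ⟨0, hn⟩
      rw [h0, zero_mul] at hx
      exact absurd hx (hv ⟨0, hn⟩).ne'
    have hc2 : 0 < c ^ 2 := by positivity
    have hune : (Finset.univ : Finset (Fin n)).Nonempty := Finset.univ_nonempty
    set m := Finset.univ.inf' hune v with hm
    have hmpos : 0 < m := by
      rw [hm, Finset.lt_inf'_iff]
      exact fun i _ => hv i
    have hmle : ∀ i, m ≤ v i := fun i => Finset.inf'_le v (Finset.mem_univ i)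
    set δ := m ^ 2 / c ^ 2 with hδ
    have hδpos : 0 < δ := by positivity
    have hUbd : ∀ i l, |U i l| ≤ 1 := by
      intro i l
      rw [abs_le_one_iff_mul_self_le_one]
      have h1 : ∑ l', U i l' * U i l' = 1 := by rw [hrow i i, if_pos rfl]
      have h2 := Finset.single_le_sum (f := fun l' => U i l' * U i l')
        (fun l' _ => mul_self_nonneg _) (Finset.mem_univ l)
      rw [h1] at h2
      exact h2
    have hncast : (0:ℝ) < (n:ℝ) := by exact_mod_cast hn
    have hthr : ∀ᶠ (k : ℕ) in Filter.atTop, ∀ l ∈ Finset.univ.erase i₀,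
        |μ l| ^ k ≤ δ / (2 * n) * μ i₀ ^ k := by
      rw [Filter.eventually_all_finset]
      intro l hl
      have hlne : l ≠ i₀ := (Finset.mem_erase.mp hl).1
      have hratio : |μ l| / μ i₀ < 1 := (div_lt_one hμpos).mpr (hdom l hlne)
      have htend := tendsto_pow_atTop_nhds_zero_of_lt_one
        (by positivity : (0:ℝ) ≤ |μ l| / μ i₀) hratio
      have hcpos : (0:ℝ) < δ / (2 * n) := by positivity
      filter_upwards [htend.eventually_lt_const hcpos] with k hk
      have hpowpos : 0 < μ i₀ ^ k := pow_pos hμpos k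
      rw [div_pow, div_lt_iff₀ hpowpos] at hk
      linarith
    obtain ⟨K, hK⟩ := Filter.eventually_atTop.mp hthr
    refine ⟨K, fun k hk i j => ?_⟩
    have hKk := hK k hk
    have hsplit : (A ^ k) i j = μ i₀ ^ k * (U i i₀ * U j i₀)
        + ∑ l ∈ Finset.univ.erase i₀, μ l ^ k * (U i l * U j l) := by
      rw [hent k i j, ← Finset.add_sum_erase _ _ (Finset.mem_univ i₀)]
    have hprod : U i i₀ * U j i₀ = v i * v j / c ^ 2 := by
      have hUi : U i i₀ = v i / c := by rw [hvexp i]; field_simp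
      have hUj : U j i₀ = v j / c := by rw [hvexp j]; field_simp
      rw [hUi, hUj, div_mul_div_comm, sq]
    have h1 : m ^ 2 ≤ v i * v j := by nlinarith [hmle i, hmle j, hmpos]
    have hmain : δ * μ i₀ ^ k ≤ μ i₀ ^ k * (U i i₀ * U j i₀) := by
      rw [hprod]
      have h2 : δ ≤ v i * v j / c ^ 2 := by rw [hδ]; gcongr
      nlinarith [pow_pos hμpos k]
    have htail : |∑ l ∈ Finset.univ.erase i₀, μ l ^ k * (U i l * U j l)|
        ≤ (δ / 2) * μ i₀ ^ k := by
      have hconst : (0:ℝ) ≤ δ / (2 * n) * μ i₀ ^ k := by positivity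
      calc |∑ l ∈ Finset.univ.erase i₀, μ l ^ k * (U i l * U j l)|
          ≤ ∑ l ∈ Finset.univ.erase i₀, |μ l ^ k * (U i l * U j l)| :=
            Finset.abs_sum_le_sum_abs _ _
        _ ≤ ∑ l ∈ Finset.univ.erase i₀, δ / (2 * n) * μ i₀ ^ k := by
            refine Finset.sum_le_sum fun l hl => ?_
            rw [abs_mul, abs_pow]
            have hU2 : |U i l * U j l| ≤ 1 := by
              rw [abs_mul]
              exact mul_le_one₀ (hUbd i l) (abs_nonneg _) (hUbd j l)
            calc |μ l| ^ k * |U i l * U j l| ≤ |μ l| ^ k * 1 :=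
                  mul_le_mul_of_nonneg_left hU2 (pow_nonneg (abs_nonneg _) k)
              _ = |μ l| ^ k := mul_one _
              _ ≤ δ / (2 * n) * μ i₀ ^ k := hKk l hl
        _ ≤ (n : ℝ) * (δ / (2 * n) * μ i₀ ^ k) := by
            rw [Finset.sum_const, nsmul_eq_mul]
            have hcard : ((Finset.univ.erase i₀).card : ℝ) ≤ (n : ℝ) := by
              have := Finset.card_le_card (Finset.erase_subset i₀ (Finset.univ : Finset (Fin n)))
              rw [Finset.card_univ, Fintype.card_fin] at this
              exact_mod_cast this
            exact mul_le_mul_of_nonneg_right hcard hconst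
        _ = (δ / 2) * μ i₀ ^ k := by
            field_simp
    rw [hsplit]
    have habs := neg_abs_le (∑ l ∈ Finset.univ.erase i₀, μ l ^ k * (U i l * U j l))
    have hpos2 : 0 < δ * μ i₀ ^ k := mul_pos hδpos (pow_pos hμpos k)
    linarith
end

section
/- A real n×n matrix A is eventually exponentially positive (there exists t₀ > 0 such that e^{At} has all entries strictly positive for all t ≥ t₀) if and only if there exists s ≥ 0 such that A + sI is eventually positive. -/
open Matrix NormedSpace Finset Filter Topology

namespace EvExpPos

variable {n : ℕ}

lemma entry_hasSum (M : Matrix (Fin n) (Fin n) ℝ) (i j : Fin n) :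
    HasSum (fun k : ℕ => (Nat.factorial k : ℝ)⁻¹ * ((M ^ k) i j)) (exp M i j) := by
  letI : SeminormedRing (Matrix (Fin n) (Fin n) ℝ) := Matrix.linftyOpSemiNormedRing
  letI : NormedRing (Matrix (Fin n) (Fin n) ℝ) := Matrix.linftyOpNormedRing
  letI : NormedAlgebra ℝ (Matrix (Fin n) (Fin n) ℝ) := Matrix.linftyOpNormedAlgebra
  have h : HasSum (fun k : ℕ => (Nat.factorial k : ℝ)⁻¹ • M ^ k) (exp M) := by
    rw [exp_eq_tsum ℝ]
    exact (expSeries_summable' (𝕂 := ℝ) M).hasSum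
  let g : Matrix (Fin n) (Fin n) ℝ →L[ℝ] ℝ :=
    (ContinuousLinearMap.proj (R := ℝ) (φ := fun _ : Fin n => ℝ) j).comp
      (ContinuousLinearMap.proj (R := ℝ) (φ := fun _ : Fin n => Fin n → ℝ) i)
  have := h.map g g.continuous
  exact this

lemma mat_binom (X : Matrix (Fin n) (Fin n) ℝ) (c : ℝ) (m : ℕ) :
    (1 + c • X) ^ m = ∑ k ∈ range (m + 1), ((m.choose k : ℝ) * c ^ k) • X ^ k := by
  rw [add_comm, Commute.add_pow (Commute.one_right (c • X)) m]
  refine Finset.sum_congr rfl fun k hk => ?_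
  rw [smul_pow, one_pow, mul_one, ← (Nat.cast_commute (m.choose k) _).eq,
    show ((m.choose k : ℕ) : Matrix (Fin n) (Fin n) ℝ)
        = (m.choose k : ℝ) • (1 : Matrix (Fin n) (Fin n) ℝ) from by
      rw [Nat.cast_smul_eq_nsmul ℝ, nsmul_eq_mul, mul_one],
    smul_mul_assoc, one_mul, smul_smul]

lemma coef_le (m k : ℕ) : (m.choose k : ℝ) * ((m:ℝ)⁻¹) ^ k ≤ (Nat.factorial k : ℝ)⁻¹ := by
  rcases Nat.eq_zero_or_pos m with rfl | hm
  · rcases Nat.eq_zero_or_pos k with rfl | hk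
    · simp
    · simp [Nat.choose_eq_zero_of_lt, hk]
  · rw [inv_pow, ← div_eq_mul_inv, inv_eq_one_div,
      div_le_div_iff₀ (by positivity) (by positivity), one_mul]
    have h := Nat.descFactorial_le_pow m k
    rw [Nat.descFactorial_eq_factorial_mul_choose] at h
    calc (m.choose k : ℝ) * (k.factorial : ℝ) = ((k.factorial * m.choose k : ℕ) : ℝ) := by
          push_cast; ring
      _ ≤ ((m ^ k : ℕ) : ℝ) := by exact_mod_cast h
      _ = (m : ℝ) ^ k := by push_cast; ring

lemma real_exp_hasSum (r : ℝ) :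
    HasSum (fun k : ℕ => (Nat.factorial k : ℝ)⁻¹ * r ^ k) (Real.exp r) := by
  rw [Real.exp_eq_exp_ℝ, exp_eq_tsum ℝ]
  simpa [smul_eq_mul] using (expSeries_summable' (𝕂 := ℝ) r).hasSum

lemma tendsto_pow_exp (X : Matrix (Fin n) (Fin n) ℝ) :
    Tendsto (fun m : ℕ => (1 + (m:ℝ)⁻¹ • X) ^ m) atTop (𝓝 (exp X)) := by
  letI : SeminormedRing (Matrix (Fin n) (Fin n) ℝ) := Matrix.linftyOpSemiNormedRing
  letI : NormedRing (Matrix (Fin n) (Fin n) ℝ) := Matrix.linftyOpNormedRing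
  letI : NormedAlgebra ℝ (Matrix (Fin n) (Fin n) ℝ) := Matrix.linftyOpNormedAlgebra
  have hfs : Summable (fun k : ℕ => (Nat.factorial k : ℝ)⁻¹ • X ^ k) :=
    expSeries_summable' (𝕂 := ℝ) X
  have hexp : exp X = ∑' k : ℕ, (Nat.factorial k : ℝ)⁻¹ • X ^ k := by
    rw [exp_eq_tsum ℝ]
  have key : ∀ m : ℕ, ‖exp X - (1 + (m:ℝ)⁻¹ • X) ^ m‖ ≤
      Real.exp ‖X‖ - (1 + (m:ℝ)⁻¹ * ‖X‖) ^ m := by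
    intro m
    set c : ℝ := (m:ℝ)⁻¹ with hc
    have hc0 : 0 ≤ c := by positivity
    set g : ℕ → Matrix (Fin n) (Fin n) ℝ :=
      fun k => if k ∈ range (m+1) then ((m.choose k : ℝ) * c ^ k) • X ^ k else 0 with hg
    set e : ℕ → ℝ := fun k => if k ∈ range (m+1) then (m.choose k : ℝ) * c ^ k else 0 with he
    have hge : ∀ k, g k = e k • X ^ k := by
      intro k; simp only [hg, he]; split <;> simp
    have hgs : Summable g :=
      summable_of_ne_finset_zero (s := range (m+1)) (fun k hk => by simp only [hg, if_neg hk])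
    have hes : Summable (fun k => e k * ‖X‖ ^ k) :=
      summable_of_ne_finset_zero (s := range (m+1))
        (fun k hk => by simp only [he, if_neg hk, zero_mul])
    have hgsum : (1 + c • X) ^ m = ∑' k, g k := by
      rw [tsum_eq_sum (s := range (m+1)) (fun k hk => by simp only [hg, if_neg hk]), mat_binom]
      exact Finset.sum_congr rfl fun k hk => by simp only [hg, if_pos hk]
    have hesum : (1 + c * ‖X‖) ^ m = ∑' k, e k * ‖X‖ ^ k := by
      rw [tsum_eq_sum (s := range (m+1))
        (fun k hk => by simp only [he, if_neg hk, zero_mul]), add_comm, add_pow]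
      refine Finset.sum_congr rfl fun k hk => ?_
      simp only [he, if_pos hk, mul_pow, one_pow]
      ring
    set d : ℕ → ℝ := fun k => (Nat.factorial k : ℝ)⁻¹ - e k with hd
    have hek : ∀ k, e k ≤ (Nat.factorial k : ℝ)⁻¹ := by
      intro k
      simp only [he]
      split
      · exact coef_le m k
      · positivity
    have hd0 : ∀ k, 0 ≤ d k := fun k => sub_nonneg.mpr (hek k)
    have hnorm : ∀ k, ‖(Nat.factorial k : ℝ)⁻¹ • X ^ k - g k‖ ≤ d k * ‖X‖ ^ k := by
      intro k
      have hfg : (Nat.factorial k : ℝ)⁻¹ • X ^ k - g k = d k • X ^ k := by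
        rw [hge k]; simp only [hd, sub_smul]
      rw [hfg, norm_smul, Real.norm_eq_abs, abs_of_nonneg (hd0 k)]
      rcases Nat.eq_zero_or_pos k with rfl | hk
      · have h0 : d 0 = 0 := by simp [hd, he]
        rw [h0, zero_mul]; positivity
      · exact mul_le_mul_of_nonneg_left (norm_pow_le' X hk) (hd0 k)
    have hds : Summable (fun k => d k * ‖X‖ ^ k) := by
      refine (((real_exp_hasSum ‖X‖).summable).sub hes).congr (fun k => ?_)
      simp only [hd]; ring
    have hfgs : Summable (fun k => ‖(Nat.factorial k : ℝ)⁻¹ • X ^ k - g k‖) :=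
      Summable.of_nonneg_of_le (fun k => norm_nonneg _) hnorm hds
    calc ‖exp X - (1 + c • X) ^ m‖
        = ‖∑' k : ℕ, ((Nat.factorial k : ℝ)⁻¹ • X ^ k - g k)‖ := by
          rw [hexp, hgsum, hfs.tsum_sub hgs]
      _ ≤ ∑' k : ℕ, ‖(Nat.factorial k : ℝ)⁻¹ • X ^ k - g k‖ := norm_tsum_le_tsum_norm hfgs
      _ ≤ ∑' k : ℕ, d k * ‖X‖ ^ k := Summable.tsum_le_tsum hnorm hfgs hds
      _ = Real.exp ‖X‖ - (1 + c * ‖X‖) ^ m := by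
          rw [hesum, ← (real_exp_hasSum ‖X‖).tsum_eq,
            ← Summable.tsum_sub (real_exp_hasSum ‖X‖).summable hes]
          exact tsum_congr fun k => by simp only [hd]; ring
  refine tendsto_iff_norm_sub_tendsto_zero.2 ?_
  have hbound : Tendsto (fun m : ℕ => Real.exp ‖X‖ - (1 + (m:ℝ)⁻¹ * ‖X‖) ^ m) atTop (𝓝 0) := by
    have h1 := Real.tendsto_one_add_div_pow_exp ‖X‖
    have h2 : Tendsto (fun m : ℕ => Real.exp ‖X‖ - (1 + ‖X‖ / m) ^ m) atTop
        (𝓝 (Real.exp ‖X‖ - Real.exp ‖X‖)) := (tendsto_const_nhds).sub h1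
    rw [sub_self] at h2
    refine h2.congr (fun m => ?_)
    rw [div_eq_inv_mul]
  exact squeeze_zero (fun m => norm_nonneg _)
    (fun m => by simpa [norm_sub_rev] using key m) hbound

lemma pos_mul (hn : 0 < n) {P Q : Matrix (Fin n) (Fin n) ℝ}
    (hP : ∀ i j, 0 < P i j) (hQ : ∀ i j, 0 < Q i j) : ∀ i j, 0 < (P * Q) i j := by
  intro i j
  rw [Matrix.mul_apply]
  exact Finset.sum_pos (fun l _ => mul_pos (hP i l) (hQ l j)) ⟨⟨0, hn⟩, Finset.mem_univ _⟩

lemma pos_pow (hn : 0 < n) {P : Matrix (Fin n) (Fin n) ℝ}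
    (hP : ∀ i j, 0 < P i j) : ∀ a : ℕ, 1 ≤ a → ∀ i j, 0 < (P ^ a) i j := by
  intro a ha
  induction a with
  | zero => omega
  | succ b ih =>
    rcases Nat.eq_zero_or_pos b with rfl | hb
    · simpa using hP
    · rw [pow_succ]
      exact pos_mul hn (ih hb) hP

lemma pos_mul_pow (hn : 0 < n) {P Q : Matrix (Fin n) (Fin n) ℝ}
    (hP : ∀ i j, 0 < P i j) (hQ : ∀ i j, 0 < Q i j) :
    ∀ b : ℕ, ∀ i j, 0 < (P * Q ^ b) i j := by
  intro b
  induction b with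
  | zero => simpa using hP
  | succ c ih =>
    have h : P * Q ^ (c + 1) = (P * Q ^ c) * Q := by rw [pow_succ, mul_assoc]
    rw [h]
    exact pos_mul hn ih hQ

lemma pos_chain (hn : 0 < n) {B : Matrix (Fin n) (Fin n) ℝ} {m : ℕ} (hm : 1 ≤ m)
    (h1 : ∀ i j, 0 < (B ^ m) i j) (h2 : ∀ i j, 0 < (B ^ (m + 1)) i j) :
    ∀ k, m * m ≤ k → ∀ i j, 0 < (B ^ k) i j := by
  intro k hk
  set q := k / m with hq
  set r := k % m with hr
  have hmod : m * q + r = k := Nat.div_add_mod k m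
  have hrm : r < m := Nat.mod_lt _ hm
  have hqm : m ≤ q := (Nat.le_div_iff_mul_le (by omega)).2 hk
  have hqr : r + 1 ≤ q := by omega
  have h1' : m * (q - r) + m * r = m * q := by
    rw [← Nat.mul_add, Nat.sub_add_cancel (by omega)]
  have h2' : (m + 1) * r = m * r + r := by ring
  have hexp : k = m * (q - r) + (m + 1) * r := by omega
  have hqr1 : 1 ≤ q - r := by omega
  rw [hexp, pow_add, pow_mul, pow_mul]
  exact fun i j => pos_mul_pow hn (pos_pow hn h1 _ hqr1) h2 r i j

lemma exp_smul_one (c : ℝ) :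
    exp (c • (1 : Matrix (Fin n) (Fin n) ℝ)) = Real.exp c • (1 : Matrix (Fin n) (Fin n) ℝ) := by
  letI : SeminormedRing (Matrix (Fin n) (Fin n) ℝ) := Matrix.linftyOpSemiNormedRing
  letI : NormedRing (Matrix (Fin n) (Fin n) ℝ) := Matrix.linftyOpNormedRing
  letI : NormedAlgebra ℝ (Matrix (Fin n) (Fin n) ℝ) := Matrix.linftyOpNormedAlgebra
  rw [show c • (1 : Matrix (Fin n) (Fin n) ℝ) = algebraMap ℝ _ c from
      (Algebra.algebraMap_eq_smul_one c).symm]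
  have h := (algebraMap_exp_comm (𝔸 := Matrix (Fin n) (Fin n) ℝ) c).symm
  rw [← Real.exp_eq_exp_ℝ, Algebra.algebraMap_eq_smul_one (Real.exp c)] at h
  exact h

lemma exp_shift (A : Matrix (Fin n) (Fin n) ℝ) (s t : ℝ) :
    exp (t • A) = Real.exp (-(t*s)) •
      exp (t • (A + s • (1 : Matrix (Fin n) (Fin n) ℝ))) := by
  set B := A + s • (1 : Matrix (Fin n) (Fin n) ℝ) with hB
  have hA : t • A = t • B + (-(t*s)) • (1 : Matrix (Fin n) (Fin n) ℝ) := by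
    rw [hB, smul_add, smul_smul]
    module
  have hcomm : Commute (t • B) ((-(t*s)) • (1 : Matrix (Fin n) (Fin n) ℝ)) :=
    ((Commute.one_right (t • B)).smul_right _)
  rw [hA, Matrix.exp_add_of_commute _ _ hcomm, exp_smul_one, Matrix.mul_smul, mul_one]

end EvExpPos

open EvExpPos

/-- A real matrix `A` is eventually exponentially positive iff `A + sI` is eventually
positive for some `s ≥ 0`. -/
theorem eventually_exp_positive_iff (n : ℕ) (A : Matrix (Fin n) (Fin n) ℝ) :
    (∃ t₀ : ℝ, 0 < t₀ ∧ ∀ t ≥ t₀, ∀ i j : Fin n,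
        0 < (NormedSpace.exp (t • A)) i j) ↔
      ∃ s : ℝ, 0 ≤ s ∧ ∃ k₀ : ℕ, ∀ k ≥ k₀, ∀ i j : Fin n,
        0 < ((A + s • (1 : Matrix (Fin n) (Fin n) ℝ)) ^ k) i j := by
  rcases Nat.eq_zero_or_pos n with rfl | hn
  · exact ⟨fun _ => ⟨0, le_refl 0, 0, fun k _ i j => i.elim0⟩,
      fun _ => ⟨1, one_pos, fun t _ i j => i.elim0⟩⟩
  constructor
  · -- forward
    rintro ⟨t₀, ht₀, hpos⟩
    set X := t₀ • A with hX
    have hE : ∀ i j, 0 < exp X i j := hpos t₀ le_rfl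
    have h1 := tendsto_pow_exp X
    have h2 : Tendsto (fun m : ℕ => (1 + (m:ℝ)⁻¹ • X) ^ (m+1)) atTop (𝓝 (exp X)) := by
      have hI : Tendsto (fun m : ℕ => 1 + (m:ℝ)⁻¹ • X) atTop (𝓝 (1 + (0:ℝ) • X)) :=
        tendsto_const_nhds.add (tendsto_inv_atTop_nhds_zero_nat.smul_const X)
      rw [zero_smul, add_zero] at hI
      have := h1.mul hI
      rw [mul_one] at this
      refine this.congr (fun m => ?_)
      rw [pow_succ]
    -- eventual entrywise positivity
    have hev1 : ∀ᶠ m : ℕ in atTop, ∀ i j : Fin n, 0 < ((1 + (m:ℝ)⁻¹ • X) ^ m) i j := by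
      rw [Filter.eventually_all]
      intro i
      rw [Filter.eventually_all]
      intro j
      have hc : Tendsto (fun m : ℕ => ((1 + (m:ℝ)⁻¹ • X) ^ m) i j) atTop (𝓝 (exp X i j)) :=
        tendsto_pi_nhds.1 (tendsto_pi_nhds.1 h1 i) j
      exact hc.eventually (eventually_gt_nhds (hE i j))
    have hev2 : ∀ᶠ m : ℕ in atTop, ∀ i j : Fin n, 0 < ((1 + (m:ℝ)⁻¹ • X) ^ (m+1)) i j := by
      rw [Filter.eventually_all]
      intro i
      rw [Filter.eventually_all]
      intro j
      have hc : Tendsto (fun m : ℕ => ((1 + (m:ℝ)⁻¹ • X) ^ (m+1)) i j) atTop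
          (𝓝 (exp X i j)) :=
        tendsto_pi_nhds.1 (tendsto_pi_nhds.1 h2 i) j
      exact hc.eventually (eventually_gt_nhds (hE i j))
    obtain ⟨m, ⟨hm1, hm2⟩, hm3⟩ := ((hev1.and hev2).and (eventually_ge_atTop 1)).exists
    have hmR : (0:ℝ) < m := by exact_mod_cast hm3
    refine ⟨(m:ℝ)/t₀, le_of_lt (by positivity), m*m, fun k hk i j => ?_⟩
    set r : ℝ := (m:ℝ)/t₀ with hrdef
    have hr : 0 < r := by positivity
    have hBs : A + r • (1 : Matrix (Fin n) (Fin n) ℝ) = r • (1 + (m:ℝ)⁻¹ • X) := by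
      rw [hX, smul_add, smul_smul, smul_smul,
        show r * (m:ℝ)⁻¹ * t₀ = 1 from by
          rw [hrdef]; field_simp,
        one_smul, add_comm]
    rw [hBs, smul_pow, Matrix.smul_apply, smul_eq_mul]
    exact mul_pos (pow_pos hr k) (pos_chain hn hm3 hm1 hm2 k hk i j)
  · -- backward
    rintro ⟨s, hs, k₀, hk⟩
    set B := A + s • (1 : Matrix (Fin n) (Fin n) ℝ) with hB
    set K := k₀ + 1 with hKdef
    have hBK : ∀ k, K ≤ k → ∀ i j, 0 < (B ^ k) i j := fun k hkk => hk k (by omega)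
    set C : Fin n → Fin n → ℝ :=
      fun i j => ∑ k ∈ range K, (Nat.factorial k : ℝ)⁻¹ * |(B ^ k) i j| with hC
    set ε : Fin n → Fin n → ℝ :=
      fun i j => (Nat.factorial K : ℝ)⁻¹ * (B ^ K) i j with hε
    have hεpos : ∀ i j, 0 < ε i j := fun i j => mul_pos (by positivity) (hBK K le_rfl i j)
    have hC0 : ∀ i j, 0 ≤ C i j := fun i j => Finset.sum_nonneg fun k _ => by positivity
    have hsum0 : ∀ i j, 0 ≤ C i j / ε i j := fun i j => div_nonneg (hC0 i j) (hεpos i j).le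
    set S : ℝ := ∑ i : Fin n, ∑ j : Fin n, (C i j / ε i j) with hSdef
    have hS0 : 0 ≤ S :=
      Finset.sum_nonneg fun i _ => Finset.sum_nonneg fun j _ => hsum0 i j
    refine ⟨1 + S, by linarith, fun t ht i j => ?_⟩
    have ht1 : (1:ℝ) ≤ t := by linarith
    have htpos : (0:ℝ) < t := by linarith
    have htC : C i j < ε i j * t := by
      have hle1 : C i j / ε i j ≤ ∑ j' : Fin n, C i j' / ε i j' :=
        Finset.single_le_sum (fun j' _ => hsum0 i j') (Finset.mem_univ j)
      have hle2 : (∑ j' : Fin n, C i j' / ε i j') ≤ S :=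
        Finset.single_le_sum (f := fun i' => ∑ j' : Fin n, C i' j' / ε i' j')
          (fun i' _ => Finset.sum_nonneg fun j' _ => hsum0 i' j') (Finset.mem_univ i)
      have hdlt : C i j / ε i j < t := by linarith
      have := (div_lt_iff₀ (hεpos i j)).1 hdlt
      linarith [this]
    rw [exp_shift A s t, ← hB, Matrix.smul_apply, smul_eq_mul]
    refine mul_pos (Real.exp_pos _) ?_
    -- entrywise series for exp (t • B)
    have hsum := entry_hasSum (t • B) i j
    have hform : (fun k : ℕ => (Nat.factorial k : ℝ)⁻¹ * (((t • B) ^ k) i j))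
        = fun k : ℕ => (Nat.factorial k : ℝ)⁻¹ * (t ^ k * (B ^ k) i j) := by
      funext k
      rw [smul_pow, Matrix.smul_apply, smul_eq_mul]
    rw [hform] at hsum
    set f : ℕ → ℝ := fun k => (Nat.factorial k : ℝ)⁻¹ * (t ^ k * (B ^ k) i j) with hf
    have hsummable : Summable f := hsum.summable
    have hsplitsum := Summable.sum_add_tsum_nat_add K hsummable
    have hts : Summable (fun k => f (k + K)) := (summable_nat_add_iff K).2 hsummable
    have htail : f K ≤ ∑' k : ℕ, f (k + K) := by
      have h0 : ∀ b : ℕ, b ≠ 0 → 0 ≤ f (b + K) := by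
        intro b _
        have := hBK (b + K) (by omega) i j
        have h1 : (0:ℝ) ≤ (Nat.factorial (b + K) : ℝ)⁻¹ := by positivity
        have h2 : 0 < t ^ (b + K) := pow_pos htpos _
        positivity
      simpa using Summable.le_tsum hts 0 h0
    have hfK : f K = (Nat.factorial K : ℝ)⁻¹ * (B ^ K) i j * t ^ K := by
      rw [hf]; ring
    have hhead : |∑ k ∈ range K, f k| ≤ C i j * t ^ k₀ := by
      calc |∑ k ∈ range K, f k| ≤ ∑ k ∈ range K, |f k| := Finset.abs_sum_le_sum_abs _ _
        _ ≤ ∑ k ∈ range K, ((Nat.factorial k : ℝ)⁻¹ * |(B ^ k) i j|) * t ^ k₀ := by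
            refine Finset.sum_le_sum fun k hkk => ?_
            have hkk' : k ≤ k₀ := by
              have := Finset.mem_range.1 hkk
              omega
            have h2 : t ^ k ≤ t ^ k₀ := pow_le_pow_right₀ ht1 hkk'
            have habs : |f k| = ((Nat.factorial k : ℝ)⁻¹ * |(B ^ k) i j|) * t ^ k := by
              rw [hf]
              rw [abs_mul, abs_mul, abs_of_nonneg (by positivity : (0:ℝ) ≤ (Nat.factorial k : ℝ)⁻¹),
                abs_of_nonneg (by positivity : (0:ℝ) ≤ t ^ k)]
              ring
            rw [habs]
            exact mul_le_mul_of_nonneg_left h2 (by positivity)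
        _ = C i j * t ^ k₀ := by rw [hC, ← Finset.sum_mul]
    have hterm : 0 < ε i j * t ^ K - C i j * t ^ k₀ := by
      have hrw : ε i j * t ^ K - C i j * t ^ k₀ = (ε i j * t - C i j) * t ^ k₀ := by
        rw [hKdef]; ring
      rw [hrw]
      exact mul_pos (by linarith) (pow_pos htpos k₀)
    have htail' : ε i j * t ^ K ≤ ∑' k : ℕ, f (k + K) := by
      rw [hε]
      calc (Nat.factorial K : ℝ)⁻¹ * (B ^ K) i j * t ^ K = f K := hfK.symm
        _ ≤ _ := htail
    have habs2 := (abs_le.1 hhead).1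
    rw [← hsum.tsum_eq, ← hsplitsum]
    linarith
end
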